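/- Let m ≥ 2 and 1 ≤ k ≤ m. Let the random m×k matrix Q be √(m/k) times the matrix obtained by removing m−k uniformly random columns from the m×m identity matrix. Then for every real m×m matrix A, ‖E[Q Qᵀ A Q Qᵀ]‖ = (m/k)·‖ ((k−1)/(m−1))·A + ((m−k)/(m−1))·diag(A) ‖, where ‖·‖ denotes the operator norm on m×m real matrices. -/

import Mathlib

open Matrix Finset

/-! The `(i, j)` entry of `P_S A P_S` is `A i j` if `{i, j} ⊆ S` and `0` otherwise, so averaging
over `S` multiplies `A i j` by the probability that a uniform `k`-subset contains `{i, j}`: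
`k / m` on the diagonal and `k (k - 1) / (m (m - 1))` off it. Hence `E[Q Qᵀ A Q Qᵀ]` is *equal* to
`(m / k) • ((k - 1) / (m - 1) • A + (m - k) / (m - 1) • diag A)`, and the norm identity is
homogeneity of the operator norm. -/

/-- The operator norm on `m × m` real matrices induced by the Euclidean norm. -/
noncomputable def opNorm {m : ℕ} (A : Matrix (Fin m) (Fin m) ℝ) : ℝ :=
  ‖Matrix.toEuclideanCLM (𝕜 := ℝ) (n := Fin m) A‖

section Counting

variable {ι : Type*} [DecidableEq ι]

-- Double counting `s ⊆ S ⊆ t`; in product form it holds for every `n`, free of truncated `n - #s`.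
lemma card_filter_powersetCard_subset_mul_choose {s t : Finset ι} (hst : s ⊆ t) (n : ℕ) :
    #{S ∈ t.powersetCard n | s ⊆ S} * (#t).choose #s = (#t).choose n * n.choose #s := by
  by_cases hsn : #s ≤ n
  · rw [card_filter_powersetCard_subset s t n hst hsn, Nat.choose_mul hsn, mul_comm]
  · have hempty : {S ∈ t.powersetCard n | s ⊆ S} = ∅ :=
      filter_eq_empty_iff.2 fun S hS hsS => hsn <| (mem_powersetCard.1 hS).2 ▸ card_le_card hsS
    rw [hempty, Nat.choose_eq_zero_of_lt (not_le.1 hsn), card_empty, zero_mul, mul_zero]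

variable [Fintype ι]

lemma card_filter_mem_powersetCard_univ_mul (i : ι) (k : ℕ) :
    (#{S ∈ univ.powersetCard k | i ∈ S} : ℝ) * Fintype.card ι =
      (Fintype.card ι).choose k * k := by
  have h := card_filter_powersetCard_subset_mul_choose (subset_univ {i}) k
  simp only [singleton_subset_iff, card_singleton, Nat.choose_one_right, card_univ] at h
  exact_mod_cast h

lemma card_filter_pair_subset_powersetCard_univ_mul {i j : ι} (hij : i ≠ j) (k : ℕ) :
    (#{S ∈ univ.powersetCard k | {i, j} ⊆ S} : ℝ) *
        (Fintype.card ι * (Fintype.card ι - 1)) =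
      (Fintype.card ι).choose k * (k * (k - 1)) := by
  have h := card_filter_powersetCard_subset_mul_choose (subset_univ {i, j}) k
  rw [card_pair hij, card_univ] at h
  have h2 := congrArg (fun n : ℕ => (n : ℝ) * 2) h
  simp only [Nat.cast_mul, Nat.cast_choose_two] at h2
  linear_combination h2

end Counting

lemma diagonal_indicator_mul_mul_diagonal_indicator_apply {n R : Type*} [Fintype n]
    [DecidableEq n] [Semiring R] (S : Finset n) (A : Matrix n n R) (i j : n) :
    (diagonal (fun i => if i ∈ S then (1 : R) else 0) * A *
        diagonal (fun i => if i ∈ S then (1 : R) else 0)) i j =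
      if {i, j} ⊆ S then A i j else 0 := by
  by_cases hi : i ∈ S <;> by_cases hj : j ∈ S <;>
    simp [diagonal_mul, mul_diagonal, insert_subset_iff, hi, hj]

lemma opNorm_smul {m : ℕ} (c : ℝ) (A : Matrix (Fin m) (Fin m) ℝ) :
    opNorm (c • A) = |c| * opNorm A := by
  rw [opNorm, _root_.map_smul, norm_smul, Real.norm_eq_abs, opNorm]

lemma randK_second_moment_eq {m k : ℕ} (hm : 2 ≤ m) (hk : 1 ≤ k) (hkm : k ≤ m)
    (A : Matrix (Fin m) (Fin m) ℝ) :
    ((m.choose k : ℝ))⁻¹ •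
        ∑ S ∈ powersetCard k (univ : Finset (Fin m)),
          (((m : ℝ) / k) • diagonal (fun i => if i ∈ S then (1 : ℝ) else 0)) * A *
            (((m : ℝ) / k) • diagonal (fun i => if i ∈ S then (1 : ℝ) else 0)) =
      ((m : ℝ) / k) •
        ((((k : ℝ) - 1) / ((m : ℝ) - 1)) • A +
          (((m : ℝ) - k) / ((m : ℝ) - 1)) • diagonal (fun i => A i i)) := by
  have hm1 : (m : ℝ) - 1 ≠ 0 := by
    have : (2 : ℝ) ≤ m := by exact_mod_cast hm
    linarith
  have hk0 : (k : ℝ) ≠ 0 := by positivity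
  have hC : (m.choose k : ℝ) ≠ 0 := by exact_mod_cast (Nat.choose_pos hkm).ne'
  ext i j
  simp only [smul_mul_assoc, mul_smul_comm, smul_smul, Matrix.smul_apply, Matrix.sum_apply,
    Matrix.add_apply, diagonal_indicator_mul_mul_diagonal_indicator_apply, smul_eq_mul, mul_ite,
    mul_zero, ← sum_filter, sum_const, nsmul_eq_mul]
  rcases eq_or_ne i j with rfl | hij
  · have h := card_filter_mem_powersetCard_univ_mul i k
    rw [Fintype.card_fin] at h
    simp only [diagonal_apply_eq, insert_eq_self.2 (mem_singleton_self i), singleton_subset_iff]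
    field_simp
    linear_combination ((m : ℝ) - 1) * A i i * h
  · have h := card_filter_pair_subset_powersetCard_univ_mul hij k
    rw [Fintype.card_fin] at h
    rw [diagonal_apply_ne _ hij]
    field_simp
    linear_combination A i j * h

theorem rand_k_Q_seminorm (m k : ℕ) (hm : 2 ≤ m) (hk : 1 ≤ k) (hkm : k ≤ m)
    (A : Matrix (Fin m) (Fin m) ℝ) :
    opNorm
        (((m.choose k : ℝ))⁻¹ •
          ∑ S ∈ Finset.powersetCard k (Finset.univ : Finset (Fin m)),
            (((m : ℝ) / k) • Matrix.diagonal (fun i => if i ∈ S then (1 : ℝ) else 0)) * A *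
              (((m : ℝ) / k) • Matrix.diagonal (fun i => if i ∈ S then (1 : ℝ) else 0))) =
      ((m : ℝ) / k) *
        opNorm
          ((((k : ℝ) - 1) / ((m : ℝ) - 1)) • A +
            (((m : ℝ) - (k : ℝ)) / ((m : ℝ) - 1)) • Matrix.diagonal (fun i => A i i)) := by
  rw [randK_second_moment_eq hm hk hkm, opNorm_smul, abs_of_nonneg (by positivity)]
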